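/- Let Θ ∈ ℝ^{p×r}, let d be an integer with 1 ≤ d ≤ r, and let (B, S) = H_d(Θ). Then: (P1) for every row j ∈ RowSupp(B), the set M_j(B) has at least d+1 elements, and every row of S has at most d nonzero entries; (P2) for every j ∈ RowSupp(B) and every k ∈ M_j(B) with s_j^(k) ≠ 0, sign(s_j^(k)) = sign(b_j^(k)); (P3) for every j ∈ RowSupp(B) and every k ∉ M_j(B), s_j^(k) = 0. -/

import Mathlib

open scoped BigOperators Classical

noncomputable section

/-- The `(d+1)`-th largest value (counted with multiplicity, `1`-indexed `d+1`) among
`|f 1|, …, |f r|`: the largest `t` such that at least `d+1` of the `|f k|` are `≥ t`.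
By the `Real.sSup` convention this is `0` when `d ≥ r`. -/
def kthLargestAbs {r : ℕ} (f : Fin r → ℝ) (d : ℕ) : ℝ :=
  sSup {t : ℝ | d + 1 ≤ (Finset.univ.filter fun k => t ≤ |f k|).card}

/-- The sparse part `S` of the decomposition `H_d(Θ) = (B, S)`: each entry is clipped
to its excess over the `(d+1)`-th largest magnitude in its row, retaining the sign. -/
def Hs {p r : ℕ} (Θ : Matrix (Fin p) (Fin r) ℝ) (d : ℕ) :
    Matrix (Fin p) (Fin r) ℝ :=
  fun j k => Real.sign (Θ j k) * max 0 (|Θ j k| - kthLargestAbs (fun l => Θ j l) d)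

/-- The block part `B = Θ − S` of the decomposition `H_d(Θ) = (B, S)`. -/
def Hb {p r : ℕ} (Θ : Matrix (Fin p) (Fin r) ℝ) (d : ℕ) :
    Matrix (Fin p) (Fin r) ℝ :=
  Θ - Hs Θ d

/-- `M_j(M)`: the set of column indices attaining the (positive) maximum magnitude
in row `j` of `M`. -/
def maxMagSet {p r : ℕ} (M : Matrix (Fin p) (Fin r) ℝ) (j : Fin p) : Finset (Fin r) :=
  Finset.univ.filter fun k => |M j k| = (⨆ l, |M j l|) ∧ 0 < |M j k|

/-!
Fix a row `θ` of `Θ` and let `v` be its `(d+1)`-th largest magnitude. Then `S` keeps the excess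
of each entry over `v` and `B = sign θ · min (|θ|, v)` clips the row at level `v`. At most `d`
magnitudes exceed `v`, and at least `d + 1` reach it as soon as the set defining `v` as a
supremum is nonempty (that set is closed, so the supremum is attained). Hence a nonzero row of
`B` forces `v > 0`; its maximal magnitude is then `v`, attained exactly where `|θ| ≥ v`, while
`S` is supported where `|θ| > v` and carries the sign of `θ` there.
-/

open Finset

namespace Real

theorem sign_mul_abs (x : ℝ) : sign x * |x| = x := by
  rcases lt_trichotomy x 0 with h | rfl | h
  · rw [sign_of_neg h, abs_of_neg h, neg_one_mul, neg_neg]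
  · simp
  · rw [sign_of_pos h, abs_of_pos h, one_mul]

theorem sign_sign_mul_of_pos (x : ℝ) {c : ℝ} (hc : 0 < c) : sign (sign x * c) = sign x := by
  rcases lt_trichotomy x 0 with h | rfl | h
  · rw [sign_of_neg h, sign_of_neg (by linarith)]
  · simp
  · rw [sign_of_pos h, one_mul, sign_of_pos hc]

theorem sub_sign_mul_max_zero_sub (x v : ℝ) :
    x - sign x * max 0 (|x| - v) = sign x * min |x| v := by
  nth_rewrite 1 [← sign_mul_abs x]
  rw [← mul_sub]
  congr 1
  rcases le_total |x| v with h | h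
  · rw [max_eq_left (by linarith), min_eq_left h, sub_zero]
  · rw [max_eq_right (by linarith), min_eq_right h, sub_sub_cancel]

end Real

def kthLargestAbsSet {r : ℕ} (f : Fin r → ℝ) (d : ℕ) : Set ℝ :=
  {t : ℝ | d + 1 ≤ #(univ.filter fun k => t ≤ |f k|)}

namespace kthLargestAbs

variable {r : ℕ} (f : Fin r → ℝ) (d : ℕ)

theorem eq_sSup : kthLargestAbs f d = sSup (kthLargestAbsSet f d) := rfl

theorem bddAbove_set : BddAbove (kthLargestAbsSet f d) := by
  refine ⟨∑ k, |f k|, fun t ht => ?_⟩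
  obtain ⟨k, hk⟩ := card_pos.mp (Nat.succ_pos d |>.trans_le ht)
  exact (mem_filter.mp hk).2.trans (single_le_sum (fun l _ => abs_nonneg (f l)) (mem_univ k))

theorem isClosed_set : IsClosed (kthLargestAbsSet f d) := by
  have h : kthLargestAbsSet f d =
      ⋃ s : Finset (Fin r), {t | d + 1 ≤ #s ∧ ∀ k ∈ s, t ≤ |f k|} := by
    ext t
    simp only [kthLargestAbsSet, Set.mem_iUnion, Set.mem_ofPred_eq]
    constructor
    · exact fun ht => ⟨_, ht, fun k hk => (mem_filter.mp hk).2⟩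
    · rintro ⟨s, hs, hst⟩
      exact hs.trans (card_le_card fun k hk => mem_filter.mpr ⟨mem_univ k, hst k hk⟩)
  rw [h]
  refine isClosed_iUnion_of_finite fun s => ?_
  simp only [Set.ofPred_and, Set.ofPred_forall]
  exact isClosed_const.inter (isClosed_biInter fun k _ => isClosed_Iic)

theorem succ_le_of_mem_set {t : ℝ} (ht : t ∈ kthLargestAbsSet f d) : d + 1 ≤ r :=
  ht.trans ((card_filter_le _ _).trans_eq (card_fin r))

theorem nonneg : 0 ≤ kthLargestAbs f d := by
  rcases (kthLargestAbsSet f d).eq_empty_or_nonempty with h | ⟨t, ht⟩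
  · rw [eq_sSup, h, Real.sSup_empty]
  · refine le_csSup (bddAbove_set f d) ?_
    simpa [kthLargestAbsSet, filter_true_of_mem] using succ_le_of_mem_set f d ht

theorem set_nonempty_of_pos (h : 0 < kthLargestAbs f d) : (kthLargestAbsSet f d).Nonempty := by
  by_contra hne
  rw [eq_sSup, Set.not_nonempty_iff_eq_empty.mp hne, Real.sSup_empty] at h
  exact lt_irrefl 0 h

theorem succ_le_card_le_abs (h : (kthLargestAbsSet f d).Nonempty) :
    d + 1 ≤ #(univ.filter fun k => kthLargestAbs f d ≤ |f k|) :=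
  (isClosed_set f d).csSup_mem h (bddAbove_set f d)

/-- If `d + 1` magnitudes exceeded `v`, the least of them would lie in the set whose supremum
is `v`. -/
theorem card_lt_abs_le : #(univ.filter fun k => kthLargestAbs f d < |f k|) ≤ d := by
  by_contra! h
  set A := univ.filter fun k => kthLargestAbs f d < |f k|
  have hA : A.Nonempty := card_pos.mp (d.zero_le.trans_lt h)
  have hmem : A.inf' hA (|f ·|) ∈ kthLargestAbsSet f d :=
    h.trans_le (card_le_card fun k hk => mem_filter.mpr ⟨mem_univ k, inf'_le _ hk⟩)
  have hlt : kthLargestAbs f d < A.inf' hA (|f ·|) :=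
    (lt_inf'_iff hA).mpr fun k hk => (mem_filter.mp hk).2
  exact (le_csSup (bddAbove_set f d) hmem).not_gt hlt

end kthLargestAbs

section Decomposition

variable {p r : ℕ} (Θ : Matrix (Fin p) (Fin r) ℝ) (d : ℕ) (j : Fin p) (k : Fin r)

theorem Hs_apply :
    Hs Θ d j k = Real.sign (Θ j k) * max 0 (|Θ j k| - kthLargestAbs (Θ j) d) := rfl

theorem Hb_apply : Hb Θ d j k = Real.sign (Θ j k) * min |Θ j k| (kthLargestAbs (Θ j) d) :=
  Real.sub_sign_mul_max_zero_sub _ _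

theorem Hs_eq_zero_of_abs_le (h : |Θ j k| ≤ kthLargestAbs (Θ j) d) : Hs Θ d j k = 0 := by
  rw [Hs_apply, max_eq_left (by linarith), mul_zero]

theorem sign_Hs (h : Hs Θ d j k ≠ 0) : Real.sign (Hs Θ d j k) = Real.sign (Θ j k) := by
  rw [Hs_apply] at h ⊢
  exact Real.sign_sign_mul_of_pos _ ((le_max_left _ _).lt_of_ne' (right_ne_zero_of_mul h))

theorem abs_Hb : |Hb Θ d j k| = min |Θ j k| (kthLargestAbs (Θ j) d) := by
  have hv := kthLargestAbs.nonneg (Θ j) d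
  rw [Hb_apply, abs_mul, abs_of_nonneg (le_min (abs_nonneg _) hv)]
  rcases eq_or_ne (Θ j k) 0 with h | h
  · simp [h, hv]
  · rcases Real.sign_apply_eq_of_ne_zero _ h with hs | hs <;> simp [hs]

theorem sign_Hb (hv : 0 < kthLargestAbs (Θ j) d) :
    Real.sign (Hb Θ d j k) = Real.sign (Θ j k) := by
  rcases eq_or_ne (Θ j k) 0 with h | h
  · simp [Hb_apply, h]
  · rw [Hb_apply]
    exact Real.sign_sign_mul_of_pos _ (lt_min (abs_pos.mpr h) hv)

theorem kthLargestAbs_pos_of_Hb_ne_zero (h : Hb Θ d j k ≠ 0) : 0 < kthLargestAbs (Θ j) d := by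
  refine (kthLargestAbs.nonneg (Θ j) d).lt_of_ne fun hv => h ?_
  rw [← abs_eq_zero, abs_Hb, ← hv, min_eq_right (abs_nonneg _)]

theorem iSup_abs_Hb (hv : 0 < kthLargestAbs (Θ j) d) :
    ⨆ l, |Hb Θ d j l| = kthLargestAbs (Θ j) d := by
  have hcard := kthLargestAbs.succ_le_card_le_abs (Θ j) d
    (kthLargestAbs.set_nonempty_of_pos (Θ j) d hv)
  obtain ⟨k₀, hk₀⟩ := card_pos.mp (Nat.succ_pos d |>.trans_le hcard)
  have : Nonempty (Fin r) := ⟨k₀⟩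
  refine le_antisymm (ciSup_le fun l => ?_) ?_
  · exact (abs_Hb Θ d j l).trans_le (min_le_right _ _)
  · refine le_ciSup_of_le (Set.finite_range _).bddAbove k₀ ?_
    rw [abs_Hb, min_eq_right (mem_filter.mp hk₀).2]

theorem mem_maxMagSet_Hb_iff (hv : 0 < kthLargestAbs (Θ j) d) :
    k ∈ maxMagSet (Hb Θ d) j ↔ kthLargestAbs (Θ j) d ≤ |Θ j k| := by
  rw [maxMagSet, mem_filter, iSup_abs_Hb Θ d j hv, abs_Hb, min_eq_right_iff]
  exact ⟨fun h => h.2.1, fun h => ⟨mem_univ k, h, lt_min (hv.trans_le h) hv⟩⟩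

theorem succ_le_card_maxMagSet_Hb (hv : 0 < kthLargestAbs (Θ j) d) :
    d + 1 ≤ #(maxMagSet (Hb Θ d) j) := by
  convert kthLargestAbs.succ_le_card_le_abs (Θ j) d
    (kthLargestAbs.set_nonempty_of_pos (Θ j) d hv) using 2
  ext k
  simp [mem_maxMagSet_Hb_iff Θ d j k hv]

theorem card_Hs_ne_zero_le : #(univ.filter fun k => Hs Θ d j k ≠ 0) ≤ d := by
  refine (card_le_card fun k hk => ?_).trans (kthLargestAbs.card_lt_abs_le (Θ j) d)
  simp only [mem_filter, mem_univ, true_and] at hk ⊢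
  exact lt_of_not_ge fun h => hk (Hs_eq_zero_of_abs_le Θ d j k h)

theorem Hs_eq_zero_of_notMem_maxMagSet_Hb (hv : 0 < kthLargestAbs (Θ j) d)
    (hk : k ∉ maxMagSet (Hb Θ d) j) : Hs Θ d j k = 0 := by
  rw [mem_maxMagSet_Hb_iff Θ d j k hv, not_le] at hk
  exact Hs_eq_zero_of_abs_le Θ d j k hk.le

end Decomposition

theorem Hd_properties (p r : ℕ)
    (Θ : Matrix (Fin p) (Fin r) ℝ) (d : ℕ) :
    ((∀ j : Fin p, (∃ k, Hb Θ d j k ≠ 0) → d + 1 ≤ (maxMagSet (Hb Θ d) j).card) ∧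
      (∀ j : Fin p, ((Finset.univ.filter fun k => Hs Θ d j k ≠ 0).card ≤ d))) ∧
    (∀ j : Fin p, (∃ k, Hb Θ d j k ≠ 0) → ∀ k ∈ maxMagSet (Hb Θ d) j,
      Hs Θ d j k ≠ 0 → Real.sign (Hs Θ d j k) = Real.sign (Hb Θ d j k)) ∧
    (∀ j : Fin p, (∃ k, Hb Θ d j k ≠ 0) → ∀ k, k ∉ maxMagSet (Hb Θ d) j →
      Hs Θ d j k = 0) := by
  have hpos : ∀ j, (∃ k, Hb Θ d j k ≠ 0) → 0 < kthLargestAbs (Θ j) d :=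
    fun j ⟨k, hk⟩ => kthLargestAbs_pos_of_Hb_ne_zero Θ d j k hk
  refine ⟨⟨fun j hB => ?_, card_Hs_ne_zero_le Θ d⟩, fun j hB k _ hS => ?_, fun j hB k hk => ?_⟩
  · exact succ_le_card_maxMagSet_Hb Θ d j (hpos j hB)
  · exact (sign_Hs Θ d j k hS).trans (sign_Hb Θ d j k (hpos j hB)).symm
  · exact Hs_eq_zero_of_notMem_maxMagSet_Hb Θ d j k (hpos j hB) hk
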